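/- For all m, n, k with 1 ≤ n < m and 1 ≤ k < m, the word E_{1,n} · δ_m · E_{1,m} · δ_m · E_{1,k} is a palindrome if and only if n = k. -/

import Mathlib

/-- The alphabet: letters a, b (for the period-doubling sequence) and c (used by Θ₂). -/
inductive Letter : Type
  | a | b | c
deriving DecidableEq, Repr

open Letter

/-- The period-doubling substitution σ : a ↦ ab, b ↦ aa, extended to words
(the extra letter c is left untouched; it is never produced). -/
def sigmaw : List Letter → List Letter :=
  fun w => w.flatMap fun x => match x with
    | .a => [.a, .b]
    | .b => [.a, .a]
    | .c => [.c]

/-- A_m = σ^m(a). -/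
def A (m : ℕ) : List Letter := sigmaw^[m] [.a]

/-- B_m = σ^m(b). -/
def B (m : ℕ) : List Letter := sigmaw^[m] [.b]

/-- δ_m, the last letter of A_m. -/
def delta (m : ℕ) : Letter := (A m).getLastD .a

/-- The period-doubling sequence D, as a function giving its (n+1)-st letter
(0-indexed); it is the fixed point of σ beginning with a, and A_{n+1} is a
prefix of it of length 2^{n+1} > n. -/
def D (n : ℕ) : Letter := (A (n + 1)).getD n .a

/-- The finite segment D[i .. i+len−1] of the period-doubling sequence,
with 1-based starting position i. -/
def Dseg (i len : ℕ) : List Letter := (List.range len).map fun k => D (i - 1 + k)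

/-- u occurs in the finite word w at (1-based) position i. -/
def OccursAt {α : Type*} (u w : List α) (i : ℕ) : Prop :=
  1 ≤ i ∧ i - 1 + u.length ≤ w.length ∧ (w.drop (i - 1)).take u.length = u

/-- u is a factor of the finite word w. -/
def IsFactor {α : Type*} (u w : List α) : Prop := ∃ i, OccursAt u w i

/-- u occurs in the period-doubling sequence D at (1-based) position i. -/
def DOccursAt (u : List Letter) (i : ℕ) : Prop := 1 ≤ i ∧ Dseg i u.length = u

/-- u is a factor of the period-doubling sequence D. -/
def FactorD (u : List Letter) : Prop := ∃ i, DOccursAt u i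

/-- L(u,p): the starting position of the p-th occurrence (p ≥ 1) of u in D. -/
noncomputable def L (u : List Letter) (p : ℕ) : ℕ := Nat.nth (DOccursAt u) (p - 1)

/-- r_p(u): the p-th return word of u (p ≥ 1), i.e. D[L(u,p) .. L(u,p+1)−1];
r_0(u) is the prefix of D preceding the first occurrence of u. -/
noncomputable def r (u : List Letter) (p : ℕ) : List Letter :=
  if p = 0 then Dseg 1 (L u 1 - 1) else Dseg (L u p) (L u (p + 1) - L u p)

/-- The morphism τ₁ : a ↦ a, b ↦ bb, extended to words. -/
def tau1 : List Letter → List Letter :=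
  fun w => w.flatMap fun x => match x with
    | .a => [.a]
    | .b => [.b, .b]
    | .c => [.c]

/-- The morphism τ₂ : a ↦ ab, b ↦ acac, extended to words. -/
def tau2 : List Letter → List Letter :=
  fun w => w.flatMap fun x => match x with
    | .a => [.a, .b]
    | .b => [.a, .c, .a, .c]
    | .c => [.c]

/-- Θ₁[p], the p-th letter (p ≥ 1) of Θ₁ = τ₁(D): since |τ₁(w)| ≥ |w|, the p-th
letter of Θ₁ is the p-th letter of the image of the length-p prefix of D. -/
def Theta1 (p : ℕ) : Letter := (tau1 (Dseg 1 p)).getD (p - 1) .a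

/-- Θ₂[p], the p-th letter (p ≥ 1) of Θ₂ = τ₂(D). -/
def Theta2 (p : ℕ) : Letter := (tau2 (Dseg 1 p)).getD (p - 1) .a

/-- The envelope word E_{1,m} = A_m with its last letter δ_m deleted. -/
def E1 (m : ℕ) : List Letter := (A m).dropLast

/-- The envelope word E_{2,m} = B_m B_{m−1} with its last letter δ_m deleted. -/
def E2 (m : ℕ) : List Letter := (B m ++ B (m - 1)).dropLast

/-- Enumeration of the envelope words in the order
E_{1,1} ⊏ E_{2,1} ⊏ E_{1,2} ⊏ E_{2,2} ⊏ …. -/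
def Eword (k : ℕ) : List Letter := if k % 2 = 0 then E1 (k / 2 + 1) else E2 (k / 2 + 1)

/-- Env(u): the ⊏-least envelope word having u as a factor. -/
noncomputable def Env (u : List Letter) : List Letter :=
  Eword (sInf {k | IsFactor u (Eword k)})

/-- The letterwise complement exchanging a and b. -/
def comp : Letter → Letter
  | .a => .b
  | .b => .a
  | .c => .c

/-! Removing the last letter of `A (m + 1) = A m ++ B m` leaves `A m ++ E1 m`, because `A m` and
`B m` differ only in their last letter; hence `E1 (m + 1) = E1 m ++ δ_m :: E1 m`, and every `E1 m`
is a palindrome. The reversal of `E1 n ++ x :: E1 m ++ x :: E1 k` is therefore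
`E1 k ++ x :: E1 m ++ x :: E1 n`. For `n < k < m` the prefixes of length `3 * 2 ^ n` of these
two words are `E1 n ++ x :: A (n + 1)`, ending in `δ_{n+1}`, and either `A (n + 1) ++ A n` or
`E1 (n + 1) ++ x :: A n`, ending in `δ_n`; consecutive `δ`s differ, so the words differ. -/

open List

lemma sigmaw_append (u v : List Letter) : sigmaw (u ++ v) = sigmaw u ++ sigmaw v :=
  flatMap_append

lemma iterate_sigmaw_append (m : ℕ) (u v : List Letter) :
    sigmaw^[m] (u ++ v) = sigmaw^[m] u ++ sigmaw^[m] v := by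
  induction m generalizing u v with
  | zero => rfl
  | succ m ih => simp only [Function.iterate_succ_apply, sigmaw_append, ih]

lemma A_succ (m : ℕ) : A (m + 1) = A m ++ B m :=
  iterate_sigmaw_append m [.a] [.b]

lemma B_succ (m : ℕ) : B (m + 1) = A m ++ A m :=
  iterate_sigmaw_append m [.a] [.a]

lemma A_ne_nil (m : ℕ) : A m ≠ [] := by
  induction m with
  | zero => simp [A]
  | succ m ih => simp [A_succ, ih]

lemma getLast?_A (m : ℕ) : (A m).getLast? = some (delta m) := by
  rw [delta, getLastD_eq_getLast?, getLast?_eq_some_getLast (A_ne_nil m), Option.getD_some]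

lemma A_eq_E1_append (m : ℕ) : A m = E1 m ++ [delta m] := by
  have h := getLast?_A m
  rw [getLast?_eq_some_getLast (A_ne_nil m), Option.some_inj] at h
  rw [E1, ← h, dropLast_append_getLast]

lemma delta_add_two (m : ℕ) : delta (m + 2) = delta m := by
  have h := getLast?_A (m + 2)
  rwa [A_succ, B_succ, ← append_assoc, getLast?_append, getLast?_A, Option.some_or,
    Option.some_inj, eq_comm] at h

lemma delta_succ_ne (m : ℕ) : delta (m + 1) ≠ delta m := by
  induction m with
  | zero => decide
  | succ m ih => rw [delta_add_two]; exact ih.symm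

lemma E1_succ (m : ℕ) : E1 (m + 1) = A m ++ E1 m := by
  induction m with
  | zero => rfl
  | succ m ih =>
    rw [E1, A_succ, B_succ, dropLast_append_of_ne_nil (by simp [A_ne_nil]),
      dropLast_append_of_ne_nil (A_ne_nil m), ← E1, ← ih, E1]

lemma E1_succ_eq_E1_append (m : ℕ) : E1 (m + 1) = E1 m ++ delta m :: E1 m := by
  rw [E1_succ, A_eq_E1_append, append_assoc, singleton_append]

lemma length_E1_add_one (m : ℕ) : (E1 m).length + 1 = 2 ^ m := by
  induction m with
  | zero => rfl
  | succ m ih => rw [E1_succ_eq_E1_append, length_append, length_cons, pow_succ]; omega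

lemma length_A (m : ℕ) : (A m).length = 2 ^ m := by
  rw [A_eq_E1_append, length_append, length_singleton, length_E1_add_one]

lemma reverse_E1 (m : ℕ) : (E1 m).reverse = E1 m := by
  induction m with
  | zero => rfl
  | succ m ih => simp [E1_succ_eq_E1_append, ih]

lemma E1_prefix_E1 {n m : ℕ} (h : n ≤ m) : E1 n <+: E1 m := by
  induction h with
  | refl => exact prefix_refl _
  | step _ ih => exact ih.trans (E1_succ_eq_E1_append _ ▸ prefix_append _ _)

lemma A_prefix_E1 {n m : ℕ} (h : n < m) : A n <+: E1 m :=
  (E1_succ n ▸ prefix_append _ _).trans (E1_prefix_E1 h)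

lemma reverse_E1_append_cons (x : Letter) (n m k : ℕ) :
    (E1 n ++ x :: E1 m ++ x :: E1 k).reverse = E1 k ++ x :: E1 m ++ x :: E1 n := by
  simp [reverse_E1]

lemma exists_prefix_E1_append_cons_getLast?_delta_succ (x : Letter) (w : List Letter)
    {n m : ℕ} (h : n + 1 < m) :
    ∃ P, P <+: E1 n ++ x :: E1 m ++ w ∧ P.length = 3 * 2 ^ n ∧
      P.getLast? = some (delta (n + 1)) := by
  refine ⟨E1 n ++ x :: A (n + 1), ?_, ?_, ?_⟩
  · rw [append_assoc, prefix_append_right_inj, cons_append, cons_prefix_cons]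
    exact ⟨rfl, (A_prefix_E1 h).trans (prefix_append _ _)⟩
  · have := length_E1_add_one n
    rw [length_append, length_cons, length_A, pow_succ]
    omega
  · rw [getLast?_append, getLast?_cons, getLast?_A, Option.getD_some, Option.some_or]

lemma exists_prefix_E1_append_cons_getLast?_delta (x : Letter) (w : List Letter)
    {n k m : ℕ} (hnk : n < k) (hkm : k < m) :
    ∃ Q, Q <+: E1 k ++ x :: E1 m ++ w ∧ Q.length = 3 * 2 ^ n ∧
      Q.getLast? = some (delta n) := by
  rcases (Nat.succ_le_of_lt hnk).eq_or_lt with rfl | hnk'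
  · refine ⟨E1 (n + 1) ++ x :: A n, ?_, ?_, ?_⟩
    · rw [append_assoc, prefix_append_right_inj, cons_append, cons_prefix_cons]
      exact ⟨rfl, (A_prefix_E1 (by omega)).trans (prefix_append _ _)⟩
    · have := length_E1_add_one (n + 1)
      rw [length_append, length_cons, length_A, pow_succ] at *
      omega
    · rw [getLast?_append, getLast?_cons, getLast?_A, Option.getD_some, Option.some_or]
  · refine ⟨A (n + 1) ++ A n, ?_, ?_, ?_⟩
    · have hpre : A (n + 1) ++ A n <+: E1 (n + 2) := by
        rw [E1_succ, E1_succ, ← append_assoc]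
        exact prefix_append _ _
      exact (hpre.trans (E1_prefix_E1 hnk')).trans ((prefix_append _ _).trans (prefix_append _ _))
    · rw [length_append, length_A, length_A, pow_succ]
      omega
    · rw [getLast?_append, getLast?_A, Option.some_or]

lemma E1_append_cons_ne (x : Letter) {n k m : ℕ} (hnk : n < k) (hkm : k < m) :
    E1 n ++ x :: E1 m ++ x :: E1 k ≠ E1 k ++ x :: E1 m ++ x :: E1 n := by
  intro h
  obtain ⟨P, hP, hPlen, hPlast⟩ :=
    exists_prefix_E1_append_cons_getLast?_delta_succ x (x :: E1 k) (by omega : n + 1 < m)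
  obtain ⟨Q, hQ, hQlen, hQlast⟩ :=
    exists_prefix_E1_append_cons_getLast?_delta x (x :: E1 n) hnk hkm
  rw [h] at hP
  have hlen : P.length = Q.length := hPlen.trans hQlen.symm
  have hPQ : P = Q := (prefix_of_prefix_length_le hP hQ hlen.le).eq_of_length hlen
  exact delta_succ_ne n (Option.some_injective _ (hPlast.symm.trans (hPQ ▸ hQlast)))

theorem palindrome_E1_delta_E1m_delta_E1_general (m n k : ℕ)
    (hnm : n < m) (hkm : k < m) :
    (E1 n ++ delta m :: E1 m ++ delta m :: E1 k).reverse =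
        E1 n ++ delta m :: E1 m ++ delta m :: E1 k ↔
      n = k := by
  rw [reverse_E1_append_cons]
  constructor
  · intro h
    by_contra hne
    rcases Nat.lt_or_gt_of_ne hne with hlt | hgt
    · exact E1_append_cons_ne _ hlt hkm h.symm
    · exact E1_append_cons_ne _ hgt hnm h
  · rintro rfl
    rfl

/-- For all m, n, k with 1 ≤ n < m and 1 ≤ k < m, the word
E_{1,n} δ_m E_{1,m} δ_m E_{1,k} is a palindrome if and only if n = k. -/
theorem palindrome_E1_delta_E1m_delta_E1 (m n k : ℕ)
    (hn : 1 ≤ n) (hnm : n < m) (hk : 1 ≤ k) (hkm : k < m) :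
    (E1 n ++ delta m :: E1 m ++ delta m :: E1 k).reverse =
        E1 n ++ delta m :: E1 m ++ delta m :: E1 k ↔
      n = k :=
  palindrome_E1_delta_E1m_delta_E1_general m n k hnm hkm
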